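/- arXiv:2210.04727 — 2 statements merged into one kernel-verified Lean document; each statement's English description precedes it below -/
import Mathlib

section
/- For all j ≥ 1, (p−1)·(r(j−1) + j − 1) < p^j. -/
def r (p : ℕ) : ℕ → ℕ
  | 0 => 1
  | 1 => p
  | j + 2 => r p j + p ^ (j + 1) * (p - 1) + 1

lemma aux3 (q : ℕ) : ∀ j, (q + 1) * (r (q + 2) j + j) < (q + 2) ^ (j + 1)
  | 0 => by simp [r]
  | 1 => by simp [r]; ring_nf; nlinarith
  | j + 2 => by
    have ih := aux3 q j
    have h2 : 2 ≤ (q + 2) ^ (j + 1) := by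
      calc 2 ≤ q + 2 := by omega
      _ = (q + 2) ^ 1 := (pow_one _).symm
      _ ≤ (q + 2) ^ (j + 1) := Nat.pow_le_pow_right (by omega) (by omega)
    show (q + 1) * (r (q + 2) j + (q + 2) ^ (j + 1) * ((q + 2) - 1) + 1 + (j + 2))
        < (q + 2) ^ (j + 2 + 1)
    have : (q + 2) ^ (j + 2 + 1) = (q + 2) ^ (j + 1) * (q + 2) ^ 2 := by ring
    rw [this]
    have hsub : (q + 2) - 1 = q + 1 := by omega
    rw [hsub]
    nlinarith [ih, h2]

theorem stmt3 (p : ℕ) (hp : 2 ≤ p) : ∀ j : ℕ, 1 ≤ j →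
    (p - 1) * (r p (j - 1) + j - 1) < p ^ j := by
  obtain ⟨q, rfl⟩ : ∃ q, p = q + 2 := ⟨p - 2, by omega⟩
  intro j hj
  obtain ⟨k, rfl⟩ : ∃ k, j = k + 1 := ⟨j - 1, by omega⟩
  have := aux3 q k
  have h1 : q + 2 - 1 = q + 1 := by omega
  have h2 : k + 1 - 1 = k := by omega
  rw [h1, h2]
  have h3 : r (q + 2) k + (k + 1) - 1 = r (q + 2) k + k := by
    have : 1 ≤ r (q + 2) k := by
      induction k using Nat.strong_induction_on with
      | _ n ih => match n with
        | 0 => simp [r]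
        | 1 => simp [r]
        | m + 2 => simp [r]
    omega
  rw [h3]
  exact this
end

section
/- For all integers t ≥ 1 and 1 ≤ Δ ≤ t, (p−1)·(r(t−1) + Δ − 1) + 1 ≤ p^t, and the inequality is strict when t ≥ 3. -/
lemma geom_aux (p : ℕ) (hp : 1 ≤ p) :
    ∀ n, (p - 1) * (Finset.range n).sum (p ^ ·) + 1 = p ^ n := by
  intro n
  induction n with
  | zero => simp
  | succ n ih =>
    rw [Finset.sum_range_succ, Nat.mul_add, pow_succ]
    have h1 : (p - 1) * p ^ n = p * p ^ n - p ^ n := Nat.sub_one_mul p (p ^ n)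
    have h2 : p ^ n ≤ p * p ^ n := Nat.le_mul_of_pos_left _ (by omega)
    have h3 : p ^ n * p = p * p ^ n := mul_comm _ _
    omega

lemma key_aux (p : ℕ) (hp : 2 ≤ p) :
    ∀ j, r p j + j ≤ (Finset.range (j + 1)).sum (p ^ ·) ∧
      (2 ≤ j → r p j + j < (Finset.range (j + 1)).sum (p ^ ·)) := by
  intro j
  induction j using Nat.strong_induction_on with
  | _ j ih =>
    match j with
    | 0 => simp [r]
    | 1 =>
      constructor
      · simp [r, Finset.sum_range_succ]
      · omega
    | (k + 2) =>
      have hk := (ih k (by omega)).1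
      have h2 : (Finset.range (k + 2 + 1)).sum (p ^ ·) =
          (Finset.range (k + 1)).sum (p ^ ·) + p ^ (k + 1) + p ^ (k + 2) := by
        rw [Finset.sum_range_succ, Finset.sum_range_succ]
      have hpow : 2 ≤ p ^ (k + 1) := by
        calc 2 = 2 ^ 1 := rfl
        _ ≤ p ^ 1 := Nat.pow_le_pow_left hp 1
        _ ≤ p ^ (k + 1) := Nat.pow_le_pow_right (by omega) (by omega)
      have hr : r p (k + 2) = r p k + p ^ (k + 1) * (p - 1) + 1 := rfl
      have hmul : p ^ (k + 1) * (p - 1) + p ^ (k + 1) = p ^ (k + 2) := by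
        have h4 : p - 1 + 1 = p := by omega
        calc p ^ (k + 1) * (p - 1) + p ^ (k + 1)
            = p ^ (k + 1) * ((p - 1) + 1) := by ring
          _ = p ^ (k + 1) * p := by rw [h4]
          _ = p ^ (k + 2) := (pow_succ p (k + 1)).symm
      exact ⟨by omega, fun _ => by omega⟩

theorem stmt9 (p : ℕ) (hp : 2 ≤ p) : ∀ t Δ : ℕ, 1 ≤ t → 1 ≤ Δ → Δ ≤ t →
    (p - 1) * (r p (t - 1) + Δ - 1) + 1 ≤ p ^ t ∧
    (3 ≤ t → (p - 1) * (r p (t - 1) + Δ - 1) + 1 < p ^ t) := by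
  intro t Δ ht hΔ hΔt
  obtain ⟨s, rfl⟩ : ∃ s, t = s + 1 := ⟨t - 1, by omega⟩
  simp only [Nat.add_sub_cancel]
  have hk := key_aux p hp s
  have hg := geom_aux p (by omega) (s + 1)
  set S := (Finset.range (s + 1)).sum (p ^ ·) with hS
  have h1 : (p - 1) * (r p s + Δ - 1) ≤ (p - 1) * S :=
    Nat.mul_le_mul_left _ (by omega)
  constructor
  · omega
  · intro h3
    have hk2 := hk.2 (by omega)
    have h2 : (p - 1) * (r p s + Δ - 1) < (p - 1) * S :=
      Nat.mul_lt_mul_of_le_of_lt (le_refl _) (by omega) (by omega)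
    omega
end
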